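/- Define h : ℝ → ℝ by h(t) = 3(sin t − t cos t)/t³ for t ≠ 0. Then ∫₀^∞ h(t)² t² dt = 3π/2. -/

import Mathlib

/-!
Since `t * h t = 3 j₁(t)` with `j₁(t) = (sin t - t cos t) / t²`, and `2i j₁(c)` is the Fourier
transform `∫₋₁¹ x e^{icx} dx`, the Fourier coefficients of `x ↦ x e^{iux}` on `[-1, 1]` are
`i j₁(u - nπ)`. Parseval's identity then gives `∑ₙ j₁(u + nπ)² = 1/3` for every `u`, and
integrating this over one period `(0, π]` gives `∫_ℝ j₁² = π/3`. As `j₁²` is even, its integral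
over `(0, ∞)` is `π/6`, and the theorem follows after multiplying by `9`.
-/

open MeasureTheory Real Set Complex
open scoped ENNReal

lemma lintegral_eq_setLIntegral_Ioc_tsum_add_zsmul {T : ℝ} (hT : 0 < T) {f : ℝ → ℝ≥0∞}
    (hf : Measurable f) : ∫⁻ x, f x = ∫⁻ x in Ioc 0 T, ∑' n : ℤ, f (x + n • T) := by
  have htranslate (n : ℤ) :
      ∫⁻ x in Ioc (n • T) ((n + 1) • T), f x = ∫⁻ x in Ioc 0 T, f (x + n • T) := by
    rw [← (measurePreserving_add_right volume (n • T)).setLIntegral_comp_preimage_emb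
      (measurableEmbedding_addRight _)]
    congr
    ext x
    simp [add_smul, add_comm]
  rw [← setLIntegral_univ, ← iUnion_Ioc_zsmul hT,
    lintegral_iUnion (fun _ => measurableSet_Ioc) (pairwise_disjoint_Ioc_zsmul T)]
  simp_rw [htranslate]
  exact (lintegral_tsum fun n => (hf.comp (measurable_add_const _)).aemeasurable).symm

lemma integral_ofReal_mul_cexp {c : ℂ} (hc : c ≠ 0) (a b : ℝ) :
    ∫ x in a..b, (x : ℂ) * cexp (c * x) =
      cexp (c * b) * (b / c - 1 / c ^ 2) - cexp (c * a) * (a / c - 1 / c ^ 2) := by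
  have hderiv (x : ℝ) :
      HasDerivAt (fun y : ℝ => cexp (c * y) * (y / c - 1 / c ^ 2)) (x * cexp (c * x)) x := by
    have hid : HasDerivAt (fun y : ℝ => (y : ℂ)) 1 x := ofRealCLM.hasDerivAt
    have hexp : HasDerivAt (fun y : ℝ => cexp (c * y)) (cexp (c * x) * c) x := by
      simpa using (hid.const_mul c).cexp
    refine (hexp.mul ((hid.div_const c).sub_const (1 / c ^ 2))).congr_deriv ?_
    field_simp
    ring
  exact intervalIntegral.integral_eq_sub_of_hasDerivAt (fun x _ => hderiv x)
    ((by fun_prop : Continuous fun x : ℝ => (x : ℂ) * cexp (c * x)).intervalIntegrable _ _)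

lemma norm_ofReal_mul_cexp_mul_I (u x : ℝ) : ‖(x : ℂ) * cexp (u * I * x)‖ = |x| := by
  rw [norm_mul, mul_right_comm, ← ofReal_mul, Complex.norm_exp_ofReal_mul_I, mul_one, norm_real,
    Real.norm_eq_abs]

noncomputable def sphericalBesselJ1 (t : ℝ) : ℝ := (Real.sin t - t * Real.cos t) / t ^ 2

lemma sphericalBesselJ1_neg (t : ℝ) : sphericalBesselJ1 (-t) = -sphericalBesselJ1 t := by
  simp only [sphericalBesselJ1, Real.sin_neg, Real.cos_neg, neg_sq]
  ring

@[fun_prop]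
lemma measurable_sphericalBesselJ1 : Measurable sphericalBesselJ1 := by
  unfold sphericalBesselJ1
  fun_prop

lemma integral_ofReal_mul_cexp_mul_I (c : ℝ) :
    ∫ x in (-1 : ℝ)..1, (x : ℂ) * cexp (c * I * x) = 2 * I * sphericalBesselJ1 c := by
  rcases eq_or_ne c 0 with rfl | hc
  · have := intervalIntegral.integral_ofReal (μ := volume) (a := -1) (b := 1) (f := fun x => x)
    simp_all [sphericalBesselJ1]
  have hc' : (c : ℂ) ≠ 0 := ofReal_ne_zero.mpr hc
  rw [integral_ofReal_mul_cexp (mul_ne_zero hc' I_ne_zero), sphericalBesselJ1]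
  have hexp_one : cexp (c * I * (1 : ℝ)) = Real.cos c + Real.sin c * I := by
    simp [Complex.exp_mul_I]
  have hexp_neg_one : cexp (c * I * (-1 : ℝ)) = Real.cos c - Real.sin c * I := by
    rw [show (c : ℂ) * I * ((-1 : ℝ) : ℂ) = ((-c : ℝ) : ℂ) * I by push_cast; ring,
      Complex.exp_mul_I]
    simp [sub_eq_add_neg]
  rw [hexp_one, hexp_neg_one]
  push_cast
  field_simp
  ring_nf
  simp only [I_pow_three]
  ring

lemma fourierCoeffOn_ofReal_mul_cexp_mul_I (u : ℝ) (n : ℤ) :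
    fourierCoeffOn (by norm_num : (-1 : ℝ) < 1) (fun x : ℝ => (x : ℂ) * cexp (u * I * x)) n =
      I * sphericalBesselJ1 (u - n * π) := by
  have hmodulate (x : ℝ) :
      fourier (-n) (x : AddCircle (1 - (-1) : ℝ)) * ((x : ℂ) * cexp (u * I * x)) =
        (x : ℂ) * cexp (((u - n * π : ℝ) : ℂ) * I * x) := by
    rw [fourier_coe_apply, mul_left_comm, ← Complex.exp_add]
    congr 2
    push_cast
    ring
  simp_rw [fourierCoeffOn_eq_integral, smul_eq_mul, hmodulate, integral_ofReal_mul_cexp_mul_I,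
    Complex.real_smul]
  push_cast
  ring

lemma hasSum_sphericalBesselJ1_add_int_mul_pi_sq (u : ℝ) :
    HasSum (fun n : ℤ => sphericalBesselJ1 (u + n * π) ^ 2) (1 / 3) := by
  have hL2 : MemLp (fun x : ℝ => (x : ℂ) * cexp (u * I * x)) 2 (volume.restrict (Ioc (-1) 1)) := by
    refine MemLp.of_bound (by fun_prop) 1 (ae_restrict_of_forall_mem measurableSet_Ioc ?_)
    intro x hx
    rw [norm_ofReal_mul_cexp_mul_I, abs_le]
    exact ⟨hx.1.le, hx.2⟩
  have parseval := hasSum_sq_fourierCoeffOn (by norm_num : (-1 : ℝ) < 1) hL2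
  simp only [norm_ofReal_mul_cexp_mul_I, sq_abs, integral_pow] at parseval
  simp only [fourierCoeffOn_ofReal_mul_cexp_mul_I, norm_mul, norm_I, one_mul, norm_real,
    Real.norm_eq_abs, sq_abs] at parseval
  rw [← (Equiv.neg ℤ).hasSum_iff] at parseval
  convert parseval using 1
  · ext n
    simp [sub_eq_add_neg]
  · norm_num

lemma lintegral_sphericalBesselJ1_sq :
    ∫⁻ t, ENNReal.ofReal (sphericalBesselJ1 t ^ 2) = ENNReal.ofReal (π / 3) := by
  have hperiodic_sum (x : ℝ) :
      ∑' n : ℤ, ENNReal.ofReal (sphericalBesselJ1 (x + n • π) ^ 2) = ENNReal.ofReal (1 / 3) := by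
    have hsum := hasSum_sphericalBesselJ1_add_int_mul_pi_sq x
    simp_rw [← zsmul_eq_mul] at hsum
    rw [← ENNReal.ofReal_tsum_of_nonneg (fun _ => sq_nonneg _) hsum.summable, hsum.tsum_eq]
  rw [lintegral_eq_setLIntegral_Ioc_tsum_add_zsmul pi_pos (by fun_prop),
    setLIntegral_congr_fun measurableSet_Ioc (fun x _ => hperiodic_sum x), setLIntegral_const,
    Real.volume_Ioc, ← ENNReal.ofReal_mul (by norm_num)]
  ring_nf

lemma integral_sphericalBesselJ1_sq : ∫ t, sphericalBesselJ1 t ^ 2 = π / 3 := by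
  rw [integral_eq_lintegral_of_nonneg_ae (.of_forall fun _ => sq_nonneg _) (by fun_prop),
    lintegral_sphericalBesselJ1_sq, ENNReal.toReal_ofReal (by positivity)]

lemma integral_Ioi_sphericalBesselJ1_sq : ∫ t in Ioi 0, sphericalBesselJ1 t ^ 2 = π / 6 := by
  have habs (x : ℝ) : sphericalBesselJ1 |x| ^ 2 = sphericalBesselJ1 x ^ 2 := by
    rcases abs_choice x with h | h <;> simp [h, sphericalBesselJ1_neg]
  have := integral_comp_abs (f := fun t => sphericalBesselJ1 t ^ 2)
  simp only [habs, integral_sphericalBesselJ1_sq] at this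
  linarith

/-- With `h t = 3(sin t − t cos t)/t³`, one has `∫₀^∞ h(t)² t² dt = 3π/2`. -/
theorem integral_h_sq_mul_sq (h : ℝ → ℝ)
    (hh : ∀ t : ℝ, t ≠ 0 → h t = 3 * (Real.sin t - t * Real.cos t) / t ^ 3) :
    ∫ t in Set.Ioi (0 : ℝ), (h t) ^ 2 * t ^ 2 = 3 * π / 2 := by
  have hpoint : ∀ t ∈ Ioi (0 : ℝ), h t ^ 2 * t ^ 2 = 9 * sphericalBesselJ1 t ^ 2 := by
    intro t (ht : 0 < t)
    rw [hh t ht.ne', sphericalBesselJ1]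
    field_simp
    ring
  rw [setIntegral_congr_fun measurableSet_Ioi hpoint, integral_const_mul,
    integral_Ioi_sphericalBesselJ1_sq]
  ring
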